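/- arXiv:1512.04287 — 3 statements merged into one kernel-verified Lean document; each statement's English description precedes it below -/
import Mathlib

section
/- Let Ω be a measurable subset of ℝ^N with finite Lebesgue measure. Let f, f_n : Ω → ℝ (n ∈ ℕ) be measurable functions and let g, g_n ∈ L¹(Ω) (n ∈ ℕ). Assume that f_n → f almost everywhere in Ω, that g_n → g weakly in L¹(Ω), that each product f_n·g_n belongs to L¹(Ω), and that f_n·g_n → ξ weakly in L¹(Ω) for some ξ ∈ L¹(Ω). Then ξ = f·g almost everywhere in Ω. -/
/-!
Where `fₙ → f` uniformly and `f` is bounded, `fₙ gₙ` and `f gₙ` have the same weak limit, since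
`|∫_E (fₙ - f) gₙ| ≤ sup_E |fₙ - f| · ‖gₙ‖₁` and a weakly convergent sequence is bounded in `L¹`
(uniform boundedness for the functionals `φ ↦ ∫ φ gₙ` on `L^∞`, whose norms are at least
`∫ |gₙ|`, as testing against the sign of `gₙ` shows). Hence `∫_E ξ = ∫_E f g` for every measurable
`E` inside such a set, so `ξ = f g` a.e. there. By Egorov's theorem and since `{|f| > M}` is small
for large `M`, these sets exhaust `Ω` up to arbitrarily small measure.
-/

open MeasureTheory Filter Topology
open scoped ENNReal

theorem Real.monotone_coe_sign : Monotone fun x : ℝ => (SignType.sign x : ℝ) := by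
  intro a b hab
  rcases lt_trichotomy a 0 with ha | ha | ha <;> rcases lt_trichotomy b 0 with hb | hb | hb <;>
    simp [sign_pos, ha, hb] <;> linarith

namespace MeasureTheory

variable {α : Type*} [MeasurableSpace α] {μ : Measure α}

def TendstoWeaklyL1 (μ : Measure α) (gn : ℕ → α → ℝ) (g : α → ℝ) : Prop :=
  ∀ φ : α → ℝ, Measurable φ → (∃ C : ℝ, ∀ᵐ x ∂μ, |φ x| ≤ C) →
    Tendsto (fun n => ∫ x, φ x * gn n x ∂μ) atTop (𝓝 (∫ x, φ x * g x ∂μ))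

theorem Lp.ae_norm_le_norm_top {E : Type*} [NormedAddCommGroup E] (φ : Lp E ∞ μ) :
    ∀ᵐ x ∂μ, ‖φ x‖ ≤ ‖φ‖ := by
  have hfin : eLpNormEssSup φ μ ≠ ⊤ := by
    simpa only [eLpNorm_exponent_top] using Lp.eLpNorm_ne_top φ
  filter_upwards [ae_le_eLpNormEssSup (f := φ)] with x hx
  rw [Lp.norm_def, eLpNorm_exponent_top, ← toReal_enorm]
  exact ENNReal.toReal_mono hfin hx

theorem exists_Lp_top_norm_le_one_integral_mul_eq_integral_abs {g : α → ℝ}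
    (hg : AEStronglyMeasurable g μ) :
    ∃ φ : Lp ℝ ∞ μ, ‖φ‖ ≤ 1 ∧ ∫ x, φ x * g x ∂μ = ∫ x, |g x| ∂μ := by
  set s : α → ℝ := fun x => SignType.sign (g x)
  have hs_le : ∀ x, ‖s x‖ ≤ 1 := fun x => by
    rcases lt_trichotomy (g x) 0 with h | h | h <;> simp [s, sign_pos, h]
  have hs : MemLp s ∞ μ := memLp_top_of_bound
    (Real.monotone_coe_sign.measurable.comp_aemeasurable hg.aemeasurable).aestronglyMeasurable 1
    (.of_forall hs_le)
  refine ⟨hs.toLp s, ?_, integral_congr_ae ?_⟩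
  · rw [Lp.norm_def, eLpNorm_exponent_top]
    refine ENNReal.toReal_le_of_le_ofReal zero_le_one (eLpNormEssSup_le_of_ae_bound ?_)
    filter_upwards [hs.coeFn_toLp] with x hx
    rw [hx]
    exact hs_le x
  · filter_upwards [hs.coeFn_toLp] with x hx
    simp only [hx, s, sign_mul_self]

theorem lpPairing_mul_toL1_apply {g : α → ℝ} (hg : Integrable g μ) (φ : Lp ℝ ∞ μ) :
    (ContinuousLinearMap.mul ℝ ℝ).lpPairing μ ∞ 1 φ (hg.toL1 g) = ∫ x, φ x * g x ∂μ := by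
  rw [ContinuousLinearMap.lpPairing_eq_integral]
  refine integral_congr_ae ?_
  filter_upwards [hg.coeFn_toL1] with x hx
  rw [ContinuousLinearMap.mul_apply', hx]

namespace TendstoWeaklyL1

variable {gn : ℕ → α → ℝ} {g : α → ℝ}

theorem exists_forall_integral_abs_le (hgn : ∀ n, Integrable (gn n) μ)
    (h : TendstoWeaklyL1 μ gn g) : ∃ C, ∀ n, ∫ x, |gn n x| ∂μ ≤ C := by
  set T : ℕ → Lp ℝ ∞ μ →L[ℝ] ℝ := fun n =>
    ((ContinuousLinearMap.mul ℝ ℝ).lpPairing μ ∞ 1).flip ((hgn n).toL1 (gn n))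
  have hT : ∀ n φ, T n φ = ∫ x, φ x * gn n x ∂μ := fun n φ => lpPairing_mul_toL1_apply (hgn n) φ
  have hbdd : ∀ φ : Lp ℝ ∞ μ, ∃ C, ∀ n, ‖T n φ‖ ≤ C := by
    intro φ
    have hlim := h φ (Lp.stronglyMeasurable φ).measurable
      ⟨‖φ‖, by simpa only [Real.norm_eq_abs] using Lp.ae_norm_le_norm_top φ⟩
    obtain ⟨C, hC⟩ := hlim.norm.bddAbove_range
    exact ⟨C, fun n => (hT n φ).symm ▸ hC ⟨n, rfl⟩⟩
  obtain ⟨C, hC⟩ := banach_steinhaus hbdd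
  refine ⟨C, fun n => ?_⟩
  obtain ⟨φ, hφ, hφg⟩ := exists_Lp_top_norm_le_one_integral_mul_eq_integral_abs (hgn n).1
  calc ∫ x, |gn n x| ∂μ = T n φ := hφg.symm.trans (hT n φ).symm
    _ ≤ ‖T n‖ * ‖φ‖ := (le_abs_self _).trans ((T n).le_opNorm φ)
    _ ≤ C := (mul_le_of_le_one_right (norm_nonneg _) hφ).trans (hC n)

theorem tendsto_setIntegral_mul (h : TendstoWeaklyL1 μ gn g) {s : Set α} (hs : MeasurableSet s)
    {φ : α → ℝ} (hφ : Measurable φ) {C : ℝ} (hφC : ∀ x ∈ s, |φ x| ≤ C) :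
    Tendsto (fun n => ∫ x in s, φ x * gn n x ∂μ) atTop (𝓝 (∫ x in s, φ x * g x ∂μ)) := by
  have hind : ∀ k : α → ℝ, ∫ x, s.indicator φ x * k x ∂μ = ∫ x in s, φ x * k x ∂μ := fun k => by
    simp only [← Set.indicator_mul_left, integral_indicator hs]
  have hbound : ∀ x, |s.indicator φ x| ≤ max C 0 := fun x => by
    by_cases hx : x ∈ s
    · rw [Set.indicator_of_mem hx]
      exact (hφC x hx).trans (le_max_left _ _)
    · rw [Set.indicator_of_notMem hx, abs_zero]
      exact le_max_right _ _
  simpa only [hind] using h _ (hφ.indicator hs) ⟨max C 0, .of_forall hbound⟩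

end TendstoWeaklyL1

variable {fn gn : ℕ → α → ℝ} {f g ξ : α → ℝ} {s : Set α}

theorem tendsto_setIntegral_sub_mul_of_tendstoUniformlyOn (hs : MeasurableSet s)
    (hu : TendstoUniformlyOn fn f atTop s) (hgn : ∀ n, Integrable (gn n) μ) {C : ℝ}
    (hC : ∀ n, ∫ x, |gn n x| ∂μ ≤ C) :
    Tendsto (fun n => ∫ x in s, (fn n x - f x) * gn n x ∂μ) atTop (𝓝 0) := by
  have hC0 : 0 ≤ C := (integral_nonneg fun x => abs_nonneg (gn 0 x)).trans (hC 0)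
  rw [Metric.tendsto_nhds]
  intro ε hε
  have hδ : 0 < ε / (C + 1) := by positivity
  filter_upwards [Metric.tendstoUniformlyOn_iff.mp hu _ hδ] with n hn
  rw [dist_zero_right]
  calc ‖∫ x in s, (fn n x - f x) * gn n x ∂μ‖
      ≤ ∫ x in s, ε / (C + 1) * |gn n x| ∂μ := by
        refine norm_integral_le_of_norm_le ((hgn n).abs.const_mul _).integrableOn ?_
        filter_upwards [ae_restrict_mem hs] with x hx
        rw [norm_mul, Real.norm_eq_abs, ← Real.dist_eq, dist_comm]
        exact mul_le_mul_of_nonneg_right (hn x hx).le (abs_nonneg _)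
    _ ≤ ε / (C + 1) * C := by
        rw [integral_const_mul]
        refine mul_le_mul_of_nonneg_left ((setIntegral_le_integral (hgn n).abs ?_).trans (hC n))
          hδ.le
        exact .of_forall fun x => abs_nonneg _
    _ < ε := by
        rw [div_mul_eq_mul_div, div_lt_iff₀ (by positivity)]
        nlinarith

theorem setIntegral_eq_setIntegral_mul_of_tendstoUniformlyOn (hs : MeasurableSet s)
    (hf : Measurable f) {M : ℝ} (hfs : ∀ x ∈ s, |f x| ≤ M)
    (hu : TendstoUniformlyOn fn f atTop s) (hgn : ∀ n, Integrable (gn n) μ)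
    (hfgn : ∀ n, Integrable (fun x => fn n x * gn n x) μ) {C : ℝ}
    (hC : ∀ n, ∫ x, |gn n x| ∂μ ≤ C) (hweak_g : TendstoWeaklyL1 μ gn g)
    (hweak_fg : TendstoWeaklyL1 μ (fun n x => fn n x * gn n x) ξ) :
    ∫ x in s, ξ x ∂μ = ∫ x in s, f x * g x ∂μ := by
  have hfgn_s : ∀ n, IntegrableOn (fun x => f x * gn n x) s μ := fun n =>
    (hgn n).integrableOn.bdd_mul hf.aestronglyMeasurable
      (by filter_upwards [ae_restrict_mem hs] with x hx using hfs x hx)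
  have hsplit : ∀ n, ∫ x in s, fn n x * gn n x ∂μ =
      ∫ x in s, (fn n x - f x) * gn n x ∂μ + ∫ x in s, f x * gn n x ∂μ := fun n => by
    simp only [sub_mul]
    rw [integral_sub (hfgn n).integrableOn (hfgn_s n), sub_add_cancel]
  have hlim_fg := hweak_fg.tendsto_setIntegral_mul hs measurable_const
    (fun _ _ => (abs_one (α := ℝ)).le)
  simp only [one_mul] at hlim_fg
  have hlim_f := (tendsto_setIntegral_sub_mul_of_tendstoUniformlyOn hs hu hgn hC).add
    (hweak_g.tendsto_setIntegral_mul hs hf hfs)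
  rw [zero_add] at hlim_f
  exact tendsto_nhds_unique hlim_fg (hlim_f.congr fun n => (hsplit n).symm)

theorem ae_restrict_eq_mul_of_tendstoUniformlyOn (hs : MeasurableSet s)
    (hf : Measurable f) {M : ℝ} (hfs : ∀ x ∈ s, |f x| ≤ M)
    (hu : TendstoUniformlyOn fn f atTop s) (hg : Integrable g μ) (hgn : ∀ n, Integrable (gn n) μ)
    (hξ : Integrable ξ μ) (hfgn : ∀ n, Integrable (fun x => fn n x * gn n x) μ) {C : ℝ}
    (hC : ∀ n, ∫ x, |gn n x| ∂μ ≤ C) (hweak_g : TendstoWeaklyL1 μ gn g)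
    (hweak_fg : TendstoWeaklyL1 μ (fun n x => fn n x * gn n x) ξ) :
    ∀ᵐ x ∂μ.restrict s, ξ x = f x * g x := by
  refine Integrable.ae_eq_of_forall_setIntegral_eq _ _ hξ.integrableOn
    (hg.integrableOn.bdd_mul hf.aestronglyMeasurable
      (by filter_upwards [ae_restrict_mem hs] with x hx using hfs x hx)) fun t ht _ => ?_
  rw [Measure.restrict_restrict ht]
  exact setIntegral_eq_setIntegral_mul_of_tendstoUniformlyOn (ht.inter hs) hf
    (fun x hx => hfs x hx.2) (hu.mono Set.inter_subset_right) hgn hfgn hC hweak_g hweak_fg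

theorem exists_measure_lt_abs_le [IsFiniteMeasure μ] (hf : Measurable f) {ε : ℝ≥0∞}
    (hε : 0 < ε) : ∃ M : ℝ, μ {x | M < |f x|} ≤ ε := by
  have hempty : ⋂ M : ℝ, {x | M < |f x|} = ∅ :=
    Set.eq_empty_of_forall_notMem fun x hx => lt_irrefl |f x| (Set.mem_iInter.1 hx _)
  have hlim := tendsto_measure_iInter_atTop (μ := μ)
    (fun M : ℝ => (measurableSet_lt measurable_const hf.abs).nullMeasurableSet)
    (fun a b hab x (hx : b < |f x|) => hab.trans_lt hx) ⟨0, measure_ne_top _ _⟩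
  rw [hempty, measure_empty] at hlim
  exact (hlim.eventually (ge_mem_nhds hε)).exists

theorem exists_bounded_tendstoUniformlyOn_of_ae_tendsto [IsFiniteMeasure μ]
    (hfn : ∀ n, Measurable (fn n)) (hf : Measurable f)
    (hae : ∀ᵐ x ∂μ, Tendsto (fun n => fn n x) atTop (𝓝 (f x))) {ε : ℝ} (hε : 0 < ε) :
    ∃ s, MeasurableSet s ∧ μ sᶜ ≤ ENNReal.ofReal ε ∧ (∃ M, ∀ x ∈ s, |f x| ≤ M) ∧
      TendstoUniformlyOn fn f atTop s := by
  obtain ⟨t, ht, htε, hu⟩ := tendstoUniformlyOn_of_ae_tendsto' (μ := μ)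
    (fun n => (hfn n).stronglyMeasurable) hf.stronglyMeasurable hae (half_pos hε)
  obtain ⟨M, hM⟩ := exists_measure_lt_abs_le (μ := μ) hf (ENNReal.ofReal_pos.2 (half_pos hε))
  refine ⟨tᶜ ∩ {x | |f x| ≤ M}, ht.compl.inter (measurableSet_le hf.abs measurable_const),
    ?_, ⟨M, fun x hx => hx.2⟩, hu.mono Set.inter_subset_left⟩
  calc μ (tᶜ ∩ {x | |f x| ≤ M})ᶜ = μ (t ∪ {x | M < |f x|}) := by
        simp only [Set.compl_inter, compl_compl, Set.compl_ofPred, not_le]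
    _ ≤ ENNReal.ofReal (ε / 2) + ENNReal.ofReal (ε / 2) :=
        (measure_union_le _ _).trans (add_le_add htε hM)
    _ = ENNReal.ofReal ε := by rw [← ENNReal.ofReal_add (half_pos hε).le (half_pos hε).le,
        add_halves]

theorem ae_of_forall_exists_ae_restrict {p : α → Prop}
    (h : ∀ ε : ℝ, 0 < ε →
      ∃ s, MeasurableSet s ∧ μ sᶜ ≤ ENNReal.ofReal ε ∧ ∀ᵐ x ∂μ.restrict s, p x) :
    ∀ᵐ x ∂μ, p x := by
  rw [ae_iff]
  refine le_antisymm (ENNReal.le_of_forall_pos_le_add fun ε hε _ => ?_) bot_le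
  obtain ⟨s, hs, hsε, hp⟩ := h ε hε
  rw [ae_restrict_iff' hs, ae_iff] at hp
  calc μ {x | ¬p x} ≤ μ ({x | ¬(x ∈ s → p x)} ∪ sᶜ) := measure_mono fun x hx => by
        by_cases hxs : x ∈ s
        · exact Or.inl fun hpx => hx (hpx hxs)
        · exact Or.inr hxs
    _ ≤ 0 + ε := (measure_union_le _ _).trans
        (add_le_add hp.le (hsε.trans ENNReal.ofReal_coe_nnreal.le))

end MeasureTheory

theorem weak_ae_convergence_general {N : ℕ} (Ω : Set (Fin N → ℝ))
    (hΩfin : volume Ω < ⊤)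
    (f : (Fin N → ℝ) → ℝ) (fn : ℕ → (Fin N → ℝ) → ℝ)
    (hf : Measurable f) (hfn : ∀ n, Measurable (fn n))
    (g ξ : (Fin N → ℝ) → ℝ) (gn : ℕ → (Fin N → ℝ) → ℝ)
    (hg : IntegrableOn g Ω) (hgn : ∀ n, IntegrableOn (gn n) Ω)
    (hξ : IntegrableOn ξ Ω)
    (hae : ∀ᵐ x ∂(volume.restrict Ω),
      Tendsto (fun n => fn n x) atTop (nhds (f x)))
    (hfngn_int : ∀ n, IntegrableOn (fun x => fn n x * gn n x) Ω)
    (hweak_g : ∀ φ : (Fin N → ℝ) → ℝ, Measurable φ →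
      (∃ C : ℝ, ∀ᵐ x ∂(volume.restrict Ω), |φ x| ≤ C) →
      Tendsto (fun n => ∫ x in Ω, φ x * gn n x) atTop
        (nhds (∫ x in Ω, φ x * g x)))
    (hweak_fg : ∀ φ : (Fin N → ℝ) → ℝ, Measurable φ →
      (∃ C : ℝ, ∀ᵐ x ∂(volume.restrict Ω), |φ x| ≤ C) →
      Tendsto (fun n => ∫ x in Ω, φ x * (fn n x * gn n x)) atTop
        (nhds (∫ x in Ω, φ x * ξ x))) :
    ∀ᵐ x ∂(volume.restrict Ω), ξ x = f x * g x := by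
  have : IsFiniteMeasure (volume.restrict Ω) := isFiniteMeasure_restrict.2 hΩfin.ne
  obtain ⟨C, hC⟩ := TendstoWeaklyL1.exists_forall_integral_abs_le hgn hweak_g
  refine ae_of_forall_exists_ae_restrict fun ε hε => ?_
  obtain ⟨s, hs, hsε, ⟨M, hM⟩, hu⟩ := exists_bounded_tendstoUniformlyOn_of_ae_tendsto hfn hf hae hε
  exact ⟨s, hs, hsε, ae_restrict_eq_mul_of_tendstoUniformlyOn hs hf hM hu hg hgn hξ hfngn_int hC
    hweak_g hweak_fg⟩

/-- **Weak–a.e. convergence (Lemma A.1).**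
If `Ω ⊆ ℝ^N` is measurable with finite measure, `fₙ → f` a.e. in `Ω`,
`gₙ ⇀ g` weakly in `L¹(Ω)` and `fₙ·gₙ ⇀ ξ` weakly in `L¹(Ω)`,
then `ξ = f·g` a.e. in `Ω`. Weak `L¹` convergence is formulated by testing
against essentially bounded measurable functions. -/
theorem weak_ae_convergence {N : ℕ} (Ω : Set (Fin N → ℝ))
    (hΩ : MeasurableSet Ω) (hΩfin : volume Ω < ⊤)
    (f : (Fin N → ℝ) → ℝ) (fn : ℕ → (Fin N → ℝ) → ℝ)
    (hf : Measurable f) (hfn : ∀ n, Measurable (fn n))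
    (g ξ : (Fin N → ℝ) → ℝ) (gn : ℕ → (Fin N → ℝ) → ℝ)
    (hg : IntegrableOn g Ω) (hgn : ∀ n, IntegrableOn (gn n) Ω)
    (hξ : IntegrableOn ξ Ω)
    (hae : ∀ᵐ x ∂(volume.restrict Ω),
      Tendsto (fun n => fn n x) atTop (nhds (f x)))
    (hfngn_int : ∀ n, IntegrableOn (fun x => fn n x * gn n x) Ω)
    (hweak_g : ∀ φ : (Fin N → ℝ) → ℝ, Measurable φ →
      (∃ C : ℝ, ∀ᵐ x ∂(volume.restrict Ω), |φ x| ≤ C) →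
      Tendsto (fun n => ∫ x in Ω, φ x * gn n x) atTop
        (nhds (∫ x in Ω, φ x * g x)))
    (hweak_fg : ∀ φ : (Fin N → ℝ) → ℝ, Measurable φ →
      (∃ C : ℝ, ∀ᵐ x ∂(volume.restrict Ω), |φ x| ≤ C) →
      Tendsto (fun n => ∫ x in Ω, φ x * (fn n x * gn n x)) atTop
        (nhds (∫ x in Ω, φ x * ξ x))) :
    ∀ᵐ x ∂(volume.restrict Ω), ξ x = f x * g x :=
  weak_ae_convergence_general Ω hΩfin f fn hf hfn g ξ gn hg hgn hξ hae hfngn_int hweak_g hweak_fg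
end

section
/- For all real numbers v, c, x ≥ 0, one has (v^{3/4}·c·x)/(1 + v·c) ≤ c^{3/4} · √(v·x²/(1 + v·c)). -/
/-- Pointwise estimate for the degenerate diffusion flux with weight `v^{3/4}`:
for all `v, c, x ≥ 0`, `(v^{3/4}·c·x)/(1+v·c) ≤ c^{3/4} · √(v·x²/(1+v·c))`. -/
theorem flux_pointwise_estimate_weighted (v c x : ℝ)
    (hv : 0 ≤ v) (hc : 0 ≤ c) (hx : 0 ≤ x) :
    v ^ ((3 : ℝ) / 4) * c * x / (1 + v * c) ≤
      c ^ ((3 : ℝ) / 4) * Real.sqrt (v * x ^ 2 / (1 + v * c)) := by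
  have hvc : 0 ≤ v * c := mul_nonneg hv hc
  have hD : (0:ℝ) < 1 + v * c := by linarith
  have ht : 0 < Real.sqrt (1 + v * c) := Real.sqrt_pos.mpr hD
  -- split the powers
  have h1 : v ^ ((3:ℝ)/4) = Real.sqrt v * v ^ ((1:ℝ)/4) := by
    rw [Real.sqrt_eq_rpow, ← Real.rpow_add' hv (by norm_num)]
    norm_num
  have h2 : c = c ^ ((3:ℝ)/4) * c ^ ((1:ℝ)/4) := by
    rw [← Real.rpow_add' hc (by norm_num)]
    norm_num
  -- key inequality
  have key : v ^ ((1:ℝ)/4) * c ^ ((1:ℝ)/4) ≤ Real.sqrt (1 + v * c) := by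
    have e : v ^ ((1:ℝ)/4) * c ^ ((1:ℝ)/4) = Real.sqrt (Real.sqrt (v * c)) := by
      rw [← Real.mul_rpow hv hc, Real.sqrt_eq_rpow, Real.sqrt_eq_rpow,
        ← Real.rpow_mul hvc]
      norm_num
    rw [e]
    apply Real.sqrt_le_sqrt
    nlinarith [Real.sq_sqrt hvc, Real.sqrt_nonneg (v * c)]
  -- rewrite the sqrt on the RHS
  have h3 : Real.sqrt (v * x ^ 2 / (1 + v * c)) =
      Real.sqrt v * x / Real.sqrt (1 + v * c) := by
    rw [Real.sqrt_div' _ (by positivity), Real.sqrt_mul hv, Real.sqrt_sq hx]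
  rw [h1, h3, show c ^ ((3:ℝ)/4) * (Real.sqrt v * x / Real.sqrt (1 + v * c)) =
      c ^ ((3:ℝ)/4) * (Real.sqrt v * x) / Real.sqrt (1 + v * c) from
      (mul_div_assoc _ _ _).symm,
    div_le_div_iff₀ hD ht]
  nth_rewrite 1 [h2]
  have hnn : (0:ℝ) ≤ Real.sqrt v * c ^ ((3:ℝ)/4) * x * Real.sqrt (1 + v * c) := by
    positivity
  nlinarith [mul_le_mul_of_nonneg_right key hnn, Real.sqrt_nonneg v,
    Real.rpow_nonneg hc ((3:ℝ)/4), Real.mul_self_sqrt hD.le]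
end

section
/- Let (Ω, μ) be a finite measure space with μ(Ω) > 0, let C > 0, and for each ε ∈ (0,1) let f_ε : Ω → [0,∞) be measurable with ∫_Ω g(max{1, f_ε}) dμ ≤ C/ε, where g(y) = y·ln(y). Then ε · ∫_Ω f_ε dμ → 0 as ε → 0⁺. -/
/-!
Splitting at the level `A > 1`, a value `y ≥ 1` either stays below `A` or satisfies
`log y ≥ log A`, so `y ≤ A + y log y / log A`; integrating gives
`∫ f ≤ A μ(Ω) + (C / ε) / log A`. With `A = ε^{-1/2}` this yields
`ε ∫ f ≤ √ε μ(Ω) + 2C / (-log ε)`, and both terms vanish as `ε → 0⁺`.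
-/

open MeasureTheory Filter Real Set Topology
open scoped ENNReal

theorem le_add_mul_log_div_log {A y : ℝ} (hA : 1 < A) (hy : 1 ≤ y) :
    y ≤ A + y * log y / log A := by
  have hlogA : 0 < log A := log_pos hA
  rcases le_or_gt y A with hyA | hAy
  · have : 0 ≤ y * log y / log A := by
      have := log_nonneg hy
      positivity
    linarith
  · have : y ≤ y * log y / log A := by
      rw [le_div_iff₀ hlogA]
      exact mul_le_mul_of_nonneg_left (log_le_log (by linarith) hAy.le) (by linarith)
    linarith

theorem ofReal_le_add_ofReal_mul_log_div_log {A : ℝ} (hA : 1 < A) (x : ℝ) :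
    ENNReal.ofReal x ≤
      ENNReal.ofReal A + ENNReal.ofReal (max 1 x * log (max 1 x)) / ENNReal.ofReal (log A) := by
  have hg : 0 ≤ max 1 x * log (max 1 x) :=
    mul_nonneg (by positivity) (log_nonneg (le_max_left _ _))
  calc ENNReal.ofReal x ≤ ENNReal.ofReal (A + max 1 x * log (max 1 x) / log A) :=
        ENNReal.ofReal_le_ofReal <|
          (le_max_right 1 x).trans (le_add_mul_log_div_log hA (le_max_left 1 x))
    _ = _ := by
        rw [ENNReal.ofReal_add (by linarith) (div_nonneg hg (log_pos hA).le),
          ENNReal.ofReal_div_of_pos (log_pos hA)]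

theorem lintegral_ofReal_le_add_lintegral_mul_log_div_log
    {Ω : Type*} [MeasurableSpace Ω] (μ : Measure Ω) (f : Ω → ℝ) {A : ℝ} (hA : 1 < A) :
    ∫⁻ x, ENNReal.ofReal (f x) ∂μ ≤
      ENNReal.ofReal A * μ univ +
        (∫⁻ x, ENNReal.ofReal (max 1 (f x) * log (max 1 (f x))) ∂μ) /
          ENNReal.ofReal (log A) := by
  have hinv : (ENNReal.ofReal (log A))⁻¹ ≠ ∞ :=
    ENNReal.inv_ne_top.2 (ENNReal.ofReal_pos.2 (log_pos hA)).ne'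
  calc ∫⁻ x, ENNReal.ofReal (f x) ∂μ
      ≤ ∫⁻ x, ENNReal.ofReal A +
          ENNReal.ofReal (max 1 (f x) * log (max 1 (f x))) / ENNReal.ofReal (log A) ∂μ :=
        lintegral_mono fun x => ofReal_le_add_ofReal_mul_log_div_log hA (f x)
    _ = _ := by
        simp_rw [div_eq_mul_inv]
        rw [lintegral_add_left measurable_const, lintegral_const,
          lintegral_mul_const' _ _ hinv]

theorem ofReal_mul_lintegral_ofReal_le_of_lintegral_mul_log_le {Ω : Type*} [MeasurableSpace Ω]
    (μ : Measure Ω) (f : Ω → ℝ) {C ε : ℝ} (hε : ε ∈ Ioo 0 1)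
    (hbound : ∫⁻ x, ENNReal.ofReal (max 1 (f x) * log (max 1 (f x))) ∂μ ≤
      ENNReal.ofReal (C / ε)) :
    ENNReal.ofReal ε * ∫⁻ x, ENNReal.ofReal (f x) ∂μ ≤
      ENNReal.ofReal (√ε) * μ univ + ENNReal.ofReal (C / (-log ε / 2)) := by
  obtain ⟨hε0, hε1⟩ := hε
  have hsqrt : 0 < √ε := sqrt_pos.2 hε0
  have hA : 1 < (√ε)⁻¹ := (one_lt_inv₀ hsqrt).2 ((sqrt_lt' one_pos).2 (by linarith))
  have hlogA : log (√ε)⁻¹ = -log ε / 2 := by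
    rw [log_inv, log_sqrt hε0.le]
    ring
  have hL : 0 < -log ε / 2 := by linarith [log_neg hε0 hε1]
  calc ENNReal.ofReal ε * ∫⁻ x, ENNReal.ofReal (f x) ∂μ
      ≤ ENNReal.ofReal ε * (ENNReal.ofReal (√ε)⁻¹ * μ univ +
          ENNReal.ofReal (C / ε) / ENNReal.ofReal (-log ε / 2)) := by
        rw [← hlogA]
        gcongr
        exact (lintegral_ofReal_le_add_lintegral_mul_log_div_log μ f hA).trans (by gcongr)
    _ = ENNReal.ofReal (ε * (√ε)⁻¹) * μ univ +
          ENNReal.ofReal (ε * (C / ε)) / ENNReal.ofReal (-log ε / 2) := by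
        rw [mul_add, ← mul_assoc, mul_div_assoc', ENNReal.ofReal_mul hε0.le,
          ENNReal.ofReal_mul hε0.le]
    _ = ENNReal.ofReal (√ε) * μ univ + ENNReal.ofReal (C / (-log ε / 2)) := by
        rw [mul_div_cancel₀ C hε0.ne', ENNReal.ofReal_div_of_pos hL, ← div_eq_mul_inv,
          div_sqrt]

theorem tendsto_ofReal_sqrt_mul_add_ofReal_div_neg_log {m : ℝ≥0∞} (hm : m ≠ ∞) (C : ℝ) :
    Tendsto (fun ε => ENNReal.ofReal (√ε) * m + ENNReal.ofReal (C / (-log ε / 2)))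
      (𝓝[>] 0) (𝓝 0) := by
  have hsqrt : Tendsto (fun ε => ENNReal.ofReal (√ε) * m) (𝓝[>] 0) (𝓝 0) := by
    have := ENNReal.Tendsto.mul_const
      ((ENNReal.continuous_ofReal.comp continuous_sqrt).tendsto 0) (Or.inr hm)
    simpa using this.mono_left nhdsWithin_le_nhds
  have hlog : Tendsto (fun ε => C / (-log ε / 2)) (𝓝[>] 0) (𝓝 0) :=
    tendsto_const_nhds.div_atTop
      ((tendsto_neg_atTop_iff.2 tendsto_log_nhdsGT_zero).atTop_div_const two_pos)
  simpa using hsqrt.add ((ENNReal.continuous_ofReal.tendsto 0).comp hlog)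

theorem eps_integral_tendsto_zero_general {Ω : Type*} [MeasurableSpace Ω]
    (μ : Measure Ω) [IsFiniteMeasure μ]
    (C : ℝ) (f : ℝ → Ω → ℝ)
    (hbound : ∀ ε ∈ Set.Ioo (0 : ℝ) 1,
      ∫⁻ x, ENNReal.ofReal (max 1 (f ε x) * Real.log (max 1 (f ε x))) ∂μ ≤
        ENNReal.ofReal (C / ε)) :
    Tendsto (fun ε => ENNReal.ofReal ε * ∫⁻ x, ENNReal.ofReal (f ε x) ∂μ)
      (nhdsWithin 0 (Set.Ioo (0 : ℝ) 1)) (nhds 0) := by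
  have hupper :=
    (tendsto_ofReal_sqrt_mul_add_ofReal_div_neg_log (measure_ne_top μ univ) C).mono_left
      (nhdsWithin_mono 0 (Ioo_subset_Ioi_self : Ioo (0 : ℝ) 1 ⊆ Ioi 0))
  refine tendsto_of_tendsto_of_tendsto_of_le_of_le' tendsto_const_nhds hupper
    (Eventually.of_forall fun _ => zero_le) ?_
  filter_upwards [self_mem_nhdsWithin] with ε hε
    using ofReal_mul_lintegral_ofReal_le_of_lintegral_mul_log_le μ (f ε) hε (hbound ε hε)

/-- Vanishing of the regularizing absorption term: on a finite measure space
with `μ(Ω) > 0`, if for each `ε ∈ (0,1)` the nonnegative measurable function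
`f_ε` satisfies `∫ g(max{1, f_ε}) dμ ≤ C/ε` with `g(y) = y·ln y`, then
`ε·∫ f_ε dμ → 0` as `ε → 0⁺`. -/
theorem eps_integral_tendsto_zero {Ω : Type*} [MeasurableSpace Ω]
    (μ : Measure Ω) [IsFiniteMeasure μ] (hμ : μ Set.univ ≠ 0)
    (C : ℝ) (hC : 0 < C) (f : ℝ → Ω → ℝ)
    (hmeas : ∀ ε ∈ Set.Ioo (0 : ℝ) 1, Measurable (f ε))
    (hnonneg : ∀ ε ∈ Set.Ioo (0 : ℝ) 1, ∀ x, 0 ≤ f ε x)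
    (hbound : ∀ ε ∈ Set.Ioo (0 : ℝ) 1,
      ∫⁻ x, ENNReal.ofReal (max 1 (f ε x) * Real.log (max 1 (f ε x))) ∂μ ≤
        ENNReal.ofReal (C / ε)) :
    Tendsto (fun ε => ENNReal.ofReal ε * ∫⁻ x, ENNReal.ofReal (f ε x) ∂μ)
      (nhdsWithin 0 (Set.Ioo (0 : ℝ) 1)) (nhds 0) :=
  eps_integral_tendsto_zero_general μ C f hbound
end
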